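/- In dimension d, let R₁, …, R_k be dyadic rectangles (products of dyadic intervals) such that for every coordinate t ∈ {1,…,d}, the side lengths |R_{1,t}|, …, |R_{k,t}| are pairwise distinct, and suppose S = ⋂_{j=1}^k R_j is nonempty. Then there exists ε ∈ {±1} with ∏_{j=1}^k h_{R_j} = ε h_S, where h_R(x₁,…,x_d) = ∏_t h_{R_t}(x_t). -/

import Mathlib

open MeasureTheory Set

/-- The dyadic interval `[j·2^k, (j+1)·2^k)`. -/
noncomputable def dyadicI (j k : ℤ) : Set ℝ :=
  Set.Ico ((j : ℝ) * 2 ^ k) (((j : ℝ) + 1) * 2 ^ k)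

/-- The left half of the dyadic interval `[j·2^k, (j+1)·2^k)`. -/
noncomputable def dyadicLeft (j k : ℤ) : Set ℝ :=
  Set.Ico ((j : ℝ) * 2 ^ k) ((j : ℝ) * 2 ^ k + 2 ^ (k - 1))

/-- The right half of the dyadic interval `[j·2^k, (j+1)·2^k)`. -/
noncomputable def dyadicRight (j k : ℤ) : Set ℝ :=
  Set.Ico ((j : ℝ) * 2 ^ k + 2 ^ (k - 1)) (((j : ℝ) + 1) * 2 ^ k)

/-- The `L^∞`-normalized Haar function of the dyadic interval `[j·2^k, (j+1)·2^k)`: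
`h_I = -𝟙_{I_left} + 𝟙_{I_right}`. -/
noncomputable def haar (j k : ℤ) (x : ℝ) : ℝ :=
  - (dyadicLeft j k).indicator (fun _ => (1 : ℝ)) x
  + (dyadicRight j k).indicator (fun _ => (1 : ℝ)) x

/-! The dyadic interval of scale `2 ^ k` containing `x` has index `⌊x / 2 ^ k⌋`, and the index
at a coarser scale `2 ^ (k + p)` is obtained from it by integer division by `2 ^ p`. So `h_{j,k}`
is a function of `⌊x / 2 ^ (k - 1)⌋` alone, hence constant on every strictly shorter dyadic
interval it meets, with value `±1` there. In each coordinate the product of the Haar functions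
is therefore a sign times the factor with the shortest side, and this factor vanishes off the
intersection. -/

theorem Finset.prod_eq_one_or_eq_neg_one {ι M : Type*} [CommMonoid M] [HasDistribNeg M]
    {s : Finset ι} {f : ι → M} (hf : ∀ i ∈ s, f i = 1 ∨ f i = -1) :
    ∏ i ∈ s, f i = 1 ∨ ∏ i ∈ s, f i = -1 :=
  Finset.prod_induction f (fun a => a = 1 ∨ a = -1)
    (by rintro a b (rfl | rfl) (rfl | rfl) <;> simp) (Or.inl rfl) hf

theorem mem_dyadicI_iff {x : ℝ} {j k : ℤ} : x ∈ dyadicI j k ↔ ⌊x / 2 ^ k⌋ = j := by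
  have hk : (0 : ℝ) < 2 ^ k := zpow_pos two_pos k
  rw [Int.floor_eq_iff, le_div_iff₀ hk, div_lt_iff₀ hk]
  rfl

theorem floor_div_two_zpow_add (x : ℝ) (k : ℤ) (p : ℕ) :
    ⌊x / 2 ^ (k + p)⌋ = ⌊x / 2 ^ k⌋ / 2 ^ p := by
  have h := Int.floor_div_natCast (x / 2 ^ k) (2 ^ p)
  push_cast at h
  rw [zpow_add₀ two_ne_zero, zpow_natCast, ← div_div, h]

theorem floor_div_two_zpow_eq_of_mem_dyadicI {x y : ℝ} {j k k' : ℤ} (hk : k ≤ k')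
    (hx : x ∈ dyadicI j k) (hy : y ∈ dyadicI j k) : ⌊x / 2 ^ k'⌋ = ⌊y / 2 ^ k'⌋ := by
  obtain ⟨p, rfl⟩ := Int.le.dest hk
  rw [mem_dyadicI_iff] at hx hy
  rw [floor_div_two_zpow_add, floor_div_two_zpow_add, hx, hy]

theorem two_zpow_eq_two_mul_two_zpow_sub_one (k : ℤ) : (2 : ℝ) ^ k = 2 * 2 ^ (k - 1) := by
  rw [← zpow_one_add₀ two_ne_zero, add_sub_cancel]

theorem dyadicLeft_eq (j k : ℤ) : dyadicLeft j k = dyadicI (2 * j) (k - 1) := by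
  simp only [dyadicLeft, dyadicI, two_zpow_eq_two_mul_two_zpow_sub_one k]
  push_cast
  congr 1 <;> ring

theorem dyadicRight_eq (j k : ℤ) : dyadicRight j k = dyadicI (2 * j + 1) (k - 1) := by
  simp only [dyadicRight, dyadicI, two_zpow_eq_two_mul_two_zpow_sub_one k]
  push_cast
  congr 1 <;> ring

theorem floor_div_two_zpow_eq_div_two (x : ℝ) (k : ℤ) :
    ⌊x / 2 ^ k⌋ = ⌊x / 2 ^ (k - 1)⌋ / 2 := by
  simpa using floor_div_two_zpow_add x (k - 1) 1

theorem haar_eq_ite (j k : ℤ) (x : ℝ) :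
    haar j k x = if ⌊x / 2 ^ (k - 1)⌋ = 2 * j then -1
      else if ⌊x / 2 ^ (k - 1)⌋ = 2 * j + 1 then 1 else 0 := by
  simp only [haar, dyadicLeft_eq, dyadicRight_eq, Set.indicator, mem_dyadicI_iff]
  split_ifs <;> first | omega | norm_num

theorem haar_eq_zero_of_notMem {j k : ℤ} {x : ℝ} (hx : x ∉ dyadicI j k) : haar j k x = 0 := by
  rw [mem_dyadicI_iff, floor_div_two_zpow_eq_div_two] at hx
  rw [haar_eq_ite]
  split_ifs <;> first | rfl | omega

theorem haar_eq_one_or_eq_neg_one_of_mem {j k : ℤ} {x : ℝ} (hx : x ∈ dyadicI j k) :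
    haar j k x = 1 ∨ haar j k x = -1 := by
  rw [mem_dyadicI_iff, floor_div_two_zpow_eq_div_two] at hx
  rw [haar_eq_ite]
  split_ifs <;> first | omega | norm_num

theorem haar_eq_of_mem_dyadicI {j k j' k' : ℤ} (hk : k < k') {x y : ℝ}
    (hx : x ∈ dyadicI j k) (hy : y ∈ dyadicI j k) : haar j' k' x = haar j' k' y := by
  rw [haar_eq_ite, haar_eq_ite, floor_div_two_zpow_eq_of_mem_dyadicI (by omega) hx hy]

theorem prod_haar_eq_mul_haar_of_isMin {ι : Type*} [Fintype ι] [DecidableEq ι] {j e : ι → ℤ}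
    (he : Function.Injective e) {x₀ : ℝ} (hx₀ : ∀ i, x₀ ∈ dyadicI (j i) (e i)) {m : ι}
    (hm : ∀ i, e m ≤ e i) (x : ℝ) :
    ∏ i, haar (j i) (e i) x =
      (∏ i ∈ Finset.univ.erase m, haar (j i) (e i) x₀) * haar (j m) (e m) x := by
  rw [← Finset.mul_prod_erase Finset.univ _ (Finset.mem_univ m), mul_comm]
  by_cases hx : x ∈ dyadicI (j m) (e m)
  · congr 1
    refine Finset.prod_congr rfl fun i hi => haar_eq_of_mem_dyadicI ?_ hx (hx₀ m)
    exact (hm i).lt_of_ne (he.ne (Finset.ne_of_mem_erase hi).symm)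
  · rw [haar_eq_zero_of_notMem hx, mul_zero, mul_zero]

theorem stmt3_general (d kk : ℕ)
    (j e : Fin kk → Fin d → ℤ)
    (hdist : ∀ t : Fin d, Function.Injective fun i : Fin kk => e i t)
    (hS : (⋂ i, Set.univ.pi fun t => dyadicI (j i t) (e i t)).Nonempty)
    (m : Fin d → Fin kk) (hm : ∀ t i, e (m t) t ≤ e i t) :
    ∃ ε : ℝ, (ε = 1 ∨ ε = -1) ∧
      ∀ x : Fin d → ℝ,
        (∏ i, ∏ t, haar (j i t) (e i t) (x t))
          = ε * ∏ t, haar (j (m t) t) (e (m t) t) (x t) := by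
  obtain ⟨x₀, hx₀⟩ := hS
  simp only [mem_iInter, mem_univ_pi] at hx₀
  refine ⟨∏ t, ∏ i ∈ Finset.univ.erase (m t), haar (j i t) (e i t) (x₀ t), ?_, fun x => ?_⟩
  · exact Finset.prod_eq_one_or_eq_neg_one fun t _ =>
      Finset.prod_eq_one_or_eq_neg_one fun i _ => haar_eq_one_or_eq_neg_one_of_mem (hx₀ i t)
  · rw [Finset.prod_comm, ← Finset.prod_mul_distrib]
    exact Finset.prod_congr rfl fun t _ =>
      prod_haar_eq_mul_haar_of_isMin (hdist t) (fun i => hx₀ i t) (hm t) (x t)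

/-- If `R₁, …, R_k` are dyadic rectangles in dimension `d` whose side lengths in each
coordinate are pairwise distinct, and the intersection `S = ⋂ R_i` is nonempty (where
in each coordinate `t` the index `m t` gives the shortest side, so `S` has sides
`R_{m t, t}`), then there is a sign `ε ∈ {±1}` with `∏ h_{R_i} = ε h_S`. -/
theorem stmt3 (d kk : ℕ) (hd : 0 < d) (hkk : 0 < kk)
    (j e : Fin kk → Fin d → ℤ)
    (hdist : ∀ t : Fin d, Function.Injective fun i : Fin kk => e i t)
    (hS : (⋂ i, Set.univ.pi fun t => dyadicI (j i t) (e i t)).Nonempty)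
    (m : Fin d → Fin kk) (hm : ∀ t i, e (m t) t ≤ e i t) :
    ∃ ε : ℝ, (ε = 1 ∨ ε = -1) ∧
      ∀ x : Fin d → ℝ,
        (∏ i, ∏ t, haar (j i t) (e i t) (x t))
          = ε * ∏ t, haar (j (m t) t) (e (m t) t) (x t) :=
  stmt3_general d kk j e hdist hS m hm
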